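/- Let Ω ⊂ ℝ² be a bounded convex open set and ω ∈ C^α(cl(Ω)) with α ∈ (0,1]. Define the distribution function ω*(t) = |{x ∈ Ω : ω(x) ≤ t}|. Then for all s ≤ t in [min ω, max ω], one has t − s ≤ C·(ω*(t) − ω*(s))^{α/2} for a constant C depending only on Ω and the C^α norm of ω. -/

import Mathlib

open MeasureTheory Metric Set Real

/-- Hölder continuity of the left inverse of the distribution function of a
Hölder continuous vorticity on a bounded convex planar domain. -/
theorem holder_left_inverse_distribution
    (Ω : Set (EuclideanSpace ℝ (Fin 2))) (hΩo : IsOpen Ω) (hΩc : Convex ℝ Ω)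
    (hΩb : Bornology.IsBounded Ω) (hΩne : Ω.Nonempty)
    (α : ℝ) (hα : α ∈ Set.Ioc (0 : ℝ) 1)
    (ω : EuclideanSpace ℝ (Fin 2) → ℝ) (hcont : ContinuousOn ω (closure Ω))
    (M : ℝ) (hM : 0 < M)
    (hHolder : ∀ x ∈ closure Ω, ∀ y ∈ closure Ω, |ω x - ω y| ≤ M * dist x y ^ α) :
    ∃ C : ℝ, 0 < C ∧
      ∀ s t : ℝ, s ≤ t →
        s ∈ Set.Icc (sInf (ω '' closure Ω)) (sSup (ω '' closure Ω)) →
        t ∈ Set.Icc (sInf (ω '' closure Ω)) (sSup (ω '' closure Ω)) →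
        t - s ≤ C * ((volume {x ∈ Ω | ω x ≤ t}).toReal -
                      (volume {x ∈ Ω | ω x ≤ s}).toReal) ^ (α / 2) := by
  obtain ⟨hα0, hα1⟩ := hα
  obtain ⟨x₀, hx₀⟩ := hΩne
  obtain ⟨ρ, hρ0, hballρ⟩ := Metric.isOpen_iff.1 hΩo x₀ hx₀
  have hKb : Bornology.IsBounded (closure Ω) := hΩb.closure
  have hKc : IsCompact (closure Ω) := hΩb.isCompact_closure
  have hx₀K : x₀ ∈ closure Ω := subset_closure hx₀
  set D : ℝ := Metric.diam (closure Ω) + 1 with hDdef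
  have hD0 : 0 < D := by
    have := Metric.diam_nonneg (s := closure Ω); linarith
  have hdistD : ∀ x ∈ closure Ω, ∀ y ∈ closure Ω, dist x y < D := fun x hx y hy =>
    lt_of_le_of_lt (Metric.dist_le_diam_of_mem hKb hx hy) (by simp [hDdef])
  set c : ℝ := (volume (Metric.ball (0 : EuclideanSpace ℝ (Fin 2)) 1)).toReal with hcdef
  have hc0 : 0 < c :=
    ENNReal.toReal_pos (measure_ball_pos _ _ one_pos).ne' measure_ball_lt_top.ne
  -- geometric lemma: a ball of radius `min 1 (r/D) * ρ` inside `Ω ∩ ball z r`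
  have geom : ∀ z ∈ closure Ω, ∀ r : ℝ, 0 < r →
      Metric.ball ((1 - min 1 (r / D)) • z + (min 1 (r / D)) • x₀) (min 1 (r / D) * ρ)
        ⊆ Ω ∩ Metric.ball z r := by
    intro z hz r hr
    set l := min 1 (r / D) with hldef
    have hl0 : 0 < l := lt_min one_pos (div_pos hr hD0)
    have hl1 : l ≤ 1 := min_le_left _ _
    have hlD : l * D ≤ r := by
      have h := min_le_right 1 (r / D)
      have : (r / D) * D = r := div_mul_cancel₀ r hD0.ne'
      nlinarith
    intro w hw
    set c₀ := (1 - l) • z + l • x₀ with hc₀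
    set y := x₀ + l⁻¹ • (w - c₀) with hy
    have hwc : ‖w - c₀‖ < l * ρ := by
      have := Metric.mem_ball.mp hw
      rwa [dist_eq_norm] at this
    have hyx₀ : dist y x₀ < ρ := by
      have h1 : dist y x₀ = l⁻¹ * ‖w - c₀‖ := by
        rw [hy, dist_eq_norm, add_sub_cancel_left, norm_smul, Real.norm_eq_abs,
          abs_of_pos (inv_pos.2 hl0)]
      rw [h1]
      calc l⁻¹ * ‖w - c₀‖ < l⁻¹ * (l * ρ) :=
            mul_lt_mul_of_pos_left hwc (inv_pos.2 hl0)
        _ = ρ := by field_simp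
    have hyΩ : y ∈ Ω := hballρ (Metric.mem_ball.mpr hyx₀)
    have hwy : w = l • y + (1 - l) • z := by
      have h2 : l • y = l • x₀ + (w - c₀) := by
        rw [hy, smul_add, smul_inv_smul₀ hl0.ne']
      rw [h2, hc₀]; abel
    have hwΩ : w ∈ Ω := by
      have := hΩc.combo_interior_closure_mem_interior
        (x := y) (y := z) (by rwa [hΩo.interior_eq]) hz hl0
        (by linarith : (0:ℝ) ≤ 1 - l) (by ring)
      rw [hΩo.interior_eq] at this
      rwa [← hwy] at this
    refine ⟨hwΩ, Metric.mem_ball.mpr ?_⟩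
    have hsub : w - z = l • (y - z) := by
      rw [hwy, smul_sub, sub_smul, one_smul]; abel
    calc dist w z = ‖w - z‖ := dist_eq_norm w z
      _ = l * ‖y - z‖ := by rw [hsub, norm_smul, Real.norm_eq_abs, abs_of_pos hl0]
      _ = l * dist y z := by rw [dist_eq_norm]
      _ < l * D := mul_lt_mul_of_pos_left (hdistD y (subset_closure hyΩ) z hz) hl0
      _ ≤ r := hlD
  -- image of the domain is a compact interval
  have himc : IsCompact (ω '' closure Ω) := hKc.image_of_continuousOn hcont
  have himne : (ω '' closure Ω).Nonempty := ⟨_, mem_image_of_mem ω hx₀K⟩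
  have hInf : sInf (ω '' closure Ω) ∈ ω '' closure Ω := himc.sInf_mem himne
  have hSup : sSup (ω '' closure Ω) ∈ ω '' closure Ω := himc.sSup_mem himne
  have hprec : IsPreconnected (ω '' closure Ω) :=
    (hΩc.closure.isPreconnected).image ω hcont
  have hosc : sSup (ω '' closure Ω) - sInf (ω '' closure Ω) ≤ M * D ^ α := by
    obtain ⟨p, hp, hpv⟩ := hSup
    obtain ⟨q, hq, hqv⟩ := hInf
    have h1 := hHolder p hp q hq
    have h2 : dist p q ^ α ≤ D ^ α :=
      Real.rpow_le_rpow dist_nonneg (hdistD p hp q hq).le hα0.le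
    have h3 : ω p - ω q ≤ |ω p - ω q| := le_abs_self _
    nlinarith [hpv, hqv]
  set C₁ : ℝ := M * D ^ α / (ρ ^ 2 * c) ^ (α / 2) with hC₁def
  set P : ℝ := (ρ / D) ^ α * c ^ (α / 2) with hPdef
  have hP0 : 0 < P := by rw [hPdef]; positivity
  set C₂ : ℝ := 4 * M / P with hC₂def
  have hC₁ : 0 < C₁ := by rw [hC₁def]; positivity
  have hC₂ : 0 < C₂ := by rw [hC₂def]; positivity
  refine ⟨C₁ + C₂, by positivity, ?_⟩
  intro s t hst hs ht
  set a : ℝ := (volume {x ∈ Ω | ω x ≤ t}).toReal with hadef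
  set b : ℝ := (volume {x ∈ Ω | ω x ≤ s}).toReal with hbdef
  have hfin_t : volume {x ∈ Ω | ω x ≤ t} < ⊤ :=
    lt_of_le_of_lt (measure_mono (sep_subset _ _)) hΩb.measure_lt_top
  have hfin_s : volume {x ∈ Ω | ω x ≤ s} < ⊤ :=
    lt_of_le_of_lt (measure_mono (sep_subset _ _)) hΩb.measure_lt_top
  have hba : b ≤ a := by
    apply ENNReal.toReal_mono hfin_t.ne
    exact measure_mono fun x hx => ⟨hx.1, hx.2.trans hst⟩
  rcases eq_or_lt_of_le hst with rfl | hst'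
  · have : (0:ℝ) ≤ (C₁ + C₂) * (a - b) ^ (α / 2) :=
      mul_nonneg (by positivity) (Real.rpow_nonneg (by linarith) _)
    linarith
  -- main case: s < t
  have hmid : (s + t) / 2 ∈ ω '' closure Ω := by
    apply hprec.Icc_subset hInf hSup
    exact ⟨by linarith [hs.1], by linarith [ht.2]⟩
  obtain ⟨z, hz, hzval⟩ := hmid
  set r : ℝ := ((t - s) / (4 * M)) ^ (α⁻¹) with hrdef
  have htsM : (0:ℝ) < (t - s) / (4 * M) := div_pos (by linarith) (by linarith)
  have hr0 : 0 < r := Real.rpow_pos_of_pos htsM _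
  have hrα : r ^ α = (t - s) / (4 * M) := Real.rpow_inv_rpow htsM.le hα0.ne'
  set l := min 1 (r / D) with hldef
  have hl0 : 0 < l := lt_min one_pos (div_pos hr0 hD0)
  set B := Metric.ball ((1 - l) • z + l • x₀) (l * ρ) with hBdef
  have hBsub : ∀ w ∈ B, w ∈ Ω ∧ s < ω w ∧ ω w ≤ t := by
    intro w hw
    obtain ⟨hwΩ, hwball⟩ := geom z hz r hr0 hw
    have hd : dist w z ^ α ≤ r ^ α :=
      Real.rpow_le_rpow dist_nonneg (Metric.mem_ball.mp hwball).le hα0.le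
    have hMd : (0:ℝ) ≤ M * dist w z ^ α := by positivity
    have h1 : |ω w - ω z| ≤ (t - s) / 4 := by
      calc |ω w - ω z| ≤ M * dist w z ^ α := hHolder w (subset_closure hwΩ) z hz
        _ ≤ M * r ^ α := by nlinarith
        _ = (t - s) / 4 := by rw [hrα]; field_simp
    have h2 := abs_le.mp h1
    rw [hzval] at h2
    exact ⟨hwΩ, by constructor <;> linarith [h2.1, h2.2]⟩
  have hdisj : Disjoint {x ∈ Ω | ω x ≤ s} B := by
    rw [Set.disjoint_left]
    intro w hw1 hw2
    exact absurd hw1.2 (not_le.mpr (hBsub w hw2).2.1)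
  have hunion : {x ∈ Ω | ω x ≤ s} ∪ B ⊆ {x ∈ Ω | ω x ≤ t} := by
    rintro w (hw | hw)
    · exact ⟨hw.1, hw.2.trans hst⟩
    · exact ⟨(hBsub w hw).1, (hBsub w hw).2.2⟩
  have hμ : volume {x ∈ Ω | ω x ≤ s} + volume B ≤ volume {x ∈ Ω | ω x ≤ t} := by
    rw [← measure_union hdisj measurableSet_ball]
    exact measure_mono hunion
  have hvol : (volume B).toReal = (l * ρ) ^ 2 * c := by
    rw [hBdef, Measure.addHaar_ball volume _ (mul_nonneg hl0.le hρ0.le),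
      finrank_euclideanSpace_fin, ENNReal.toReal_mul,
      ENNReal.toReal_ofReal (sq_nonneg (l * ρ))]
  have hkey : (l * ρ) ^ 2 * c ≤ a - b := by
    have h1 : b + (volume B).toReal ≤ a := by
      rw [← ENNReal.toReal_add hfin_s.ne measure_ball_lt_top.ne]
      exact ENNReal.toReal_mono hfin_t.ne hμ
    rw [hvol] at h1
    linarith
  have hab0 : (0:ℝ) < a - b :=
    lt_of_lt_of_le (mul_pos (pow_pos (mul_pos hl0 hρ0) 2) hc0) hkey
  rcases le_or_gt D r with hDr | hrD
  · -- case r ≥ D : l = 1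
    have hl1 : l = 1 := min_eq_left ((one_le_div hD0).mpr hDr)
    rw [hl1, one_mul] at hkey
    have hrp : (ρ ^ 2 * c) ^ (α / 2) ≤ (a - b) ^ (α / 2) :=
      Real.rpow_le_rpow (by positivity) hkey (by positivity)
    have hC₁m : C₁ * (ρ ^ 2 * c) ^ (α / 2) = M * D ^ α := by
      rw [hC₁def]
      exact div_mul_cancel₀ _ (ne_of_gt (Real.rpow_pos_of_pos (by positivity) (α / 2)))
    have h0 : (0:ℝ) ≤ (a - b) ^ (α / 2) := Real.rpow_nonneg hab0.le _
    calc t - s ≤ M * D ^ α := by linarith [hosc, hs.1, ht.2]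
      _ = C₁ * (ρ ^ 2 * c) ^ (α / 2) := hC₁m.symm
      _ ≤ C₁ * (a - b) ^ (α / 2) := mul_le_mul_of_nonneg_left hrp hC₁.le
      _ ≤ (C₁ + C₂) * (a - b) ^ (α / 2) :=
          mul_le_mul_of_nonneg_right (by linarith) h0
  · -- case r < D : l = r / D
    have hl1 : l = r / D := min_eq_right ((div_le_one hD0).mpr hrD.le)
    rw [hl1] at hkey
    have hX : ((r / D * ρ) ^ 2 * c) ^ (α / 2)
        = (t - s) / (4 * M) * P := by
      rw [hPdef]
      rw [Real.mul_rpow (by positivity) (by positivity)]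
      have h2 : ((r / D * ρ) ^ 2 : ℝ) ^ (α / 2) = (r / D * ρ) ^ α := by
        rw [← Real.rpow_natCast (r / D * ρ) 2, ← Real.rpow_mul (by positivity)]
        norm_num
        congr 1
        ring
      rw [h2]
      have h3 : (r / D * ρ : ℝ) = r * (ρ / D) := by ring
      rw [h3, Real.mul_rpow hr0.le (by positivity), hrα]
      ring
    have hXle : (t - s) / (4 * M) * P ≤ (a - b) ^ (α / 2) := by
      rw [← hX]
      exact Real.rpow_le_rpow (mul_nonneg (sq_nonneg _) hc0.le) hkey (by positivity)
    have hC₂m : C₂ * ((t - s) / (4 * M) * P) = t - s := by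
      rw [hC₂def]
      field_simp
    have h0 : (0:ℝ) ≤ (a - b) ^ (α / 2) := Real.rpow_nonneg hab0.le _
    calc t - s = C₂ * ((t - s) / (4 * M) * P) := hC₂m.symm
      _ ≤ C₂ * (a - b) ^ (α / 2) := mul_le_mul_of_nonneg_left hXle hC₂.le
      _ ≤ (C₁ + C₂) * (a - b) ^ (α / 2) :=
          mul_le_mul_of_nonneg_right (by linarith) h0
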